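/- arXiv:2401.08792 — 4 statements merged into one kernel-verified Lean document; each statement's English description precedes it below -/
import Mathlib

section
/- Let E be a Banach lattice, Y a Banach space, and T : E → Y a bounded operator. If T(D) is relatively compact for every disjoint normalized subset D of the positive cone E₊, then T(D) is relatively compact for every disjoint bounded subset D of E. -/
open Filter Topology Bornology

noncomputable section

/-- A set in a Banach lattice is disjoint if its elements are pairwise disjoint. -/
def DisjointSet {E : Type*} [NormedAddCommGroup E] [Lattice E] [IsOrderedAddMonoid E]
    [HasSolidNorm E] (D : Set E) : Prop :=
  ∀ x ∈ D, ∀ y ∈ D, x ≠ y → |x| ⊓ |y| = 0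

section Aux

variable {E : Type*} [NormedAddCommGroup E] [Lattice E] [IsOrderedAddMonoid E] [HasSolidNorm E]
  [NormedSpace ℝ E]

private lemma aux_pow_nsmul : ∀ (n : ℕ) (y : E), 0 ≤ (2 ^ n : ℕ) • y → 0 ≤ y := by
  intro n
  induction n with
  | zero => intro y hy; simpa using hy
  | succ n ih =>
    intro y hy
    have h2 : (2 ^ (n + 1) : ℕ) • y = (2 ^ n : ℕ) • (2 • y) := by
      rw [← mul_nsmul]
      ring_nf
    exact nsmul_two_semiclosed (ih _ (by rwa [h2] at hy))

private lemma rsmul_nonneg (c : ℝ) (hc : 0 ≤ c) (x : E) (hx : 0 ≤ x) : 0 ≤ c • x := by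
  have key : ∀ (k n : ℕ), 0 ≤ ((k : ℝ) / 2 ^ n) • x := by
    intro k n
    apply aux_pow_nsmul n
    have h1 : (2 ^ n : ℕ) • (((k : ℝ) / 2 ^ n) • x) = (k : ℕ) • x := by
      rw [← Nat.cast_smul_eq_nsmul ℝ (2 ^ n), ← Nat.cast_smul_eq_nsmul ℝ k, smul_smul]
      congr 1
      push_cast
      field_simp
    rw [h1]
    exact nsmul_nonneg hx k
  set s : ℕ → ℝ := fun n => (⌊c * 2 ^ n⌋₊ : ℝ) / 2 ^ n with hs
  have hmem : ∀ n, 0 ≤ s n • x := fun n => key _ n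
  have hto : Tendsto s atTop (𝓝 c) := by
    rw [← tendsto_sub_nhds_zero_iff]
    apply squeeze_zero_norm (a := fun n => (1 / 2 : ℝ) ^ n)
    · intro n
      have hpos : (0 : ℝ) < 2 ^ n := by positivity
      have hcn : 0 ≤ c * 2 ^ n := by positivity
      have h1 : (⌊c * 2 ^ n⌋₊ : ℝ) ≤ c * 2 ^ n := Nat.floor_le hcn
      have h2 : c * 2 ^ n < (⌊c * 2 ^ n⌋₊ : ℝ) + 1 := Nat.lt_floor_add_one _
      have heq : s n - c = ((⌊c * 2 ^ n⌋₊ : ℝ) - c * 2 ^ n) / 2 ^ n := by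
        rw [hs]
        field_simp
      have habs : |(⌊c * 2 ^ n⌋₊ : ℝ) - c * 2 ^ n| ≤ 1 := by
        rw [abs_le]; constructor <;> linarith
      calc ‖s n - c‖ = |(⌊c * 2 ^ n⌋₊ : ℝ) - c * 2 ^ n| / 2 ^ n := by
            rw [Real.norm_eq_abs, heq, abs_div, abs_of_pos hpos]
        _ ≤ 1 / 2 ^ n := by gcongr
        _ = (1 / 2 : ℝ) ^ n := by rw [div_pow, one_pow]
    · exact tendsto_pow_atTop_nhds_zero_of_lt_one (by norm_num) (by norm_num)
  have hsm : Tendsto (fun n => s n • x) atTop (𝓝 (c • x)) :=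
    hto.smul tendsto_const_nhds
  exact isClosed_nonneg.mem_of_tendsto hsm (Eventually.of_forall hmem)

private lemma rsmul_mono {c : ℝ} (hc : 0 ≤ c) {x y : E} (h : x ≤ y) : c • x ≤ c • y := by
  have := rsmul_nonneg c hc (y - x) (sub_nonneg.2 h)
  rwa [smul_sub, sub_nonneg] at this

private lemma rsmul_mono_left {c d : ℝ} (h : c ≤ d) {x : E} (hx : 0 ≤ x) : c • x ≤ d • x := by
  have := rsmul_nonneg (d - c) (sub_nonneg.2 h) x hx
  rwa [sub_smul, sub_nonneg] at this

/-- Disjointness is preserved by nonnegative scaling. -/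
private lemma inf_smul_eq_zero {a b : E} (ha : 0 ≤ a) (hb : 0 ≤ b) (hab : a ⊓ b = 0)
    {c d : ℝ} (hc : 0 ≤ c) (hd : 0 ≤ d) : (c • a) ⊓ (d • b) = 0 := by
  rcases hc.eq_or_lt with rfl | hc'
  · rw [zero_smul]
    exact inf_eq_left.mpr (rsmul_nonneg d hd b hb)
  rcases hd.eq_or_lt with rfl | hd'
  · rw [zero_smul]
    exact inf_eq_right.mpr (rsmul_nonneg c hc a ha)
  set e := (c • a) ⊓ (d • b) with he
  have he0 : 0 ≤ e := le_inf (rsmul_nonneg c hc a ha) (rsmul_nonneg d hd b hb)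
  set m := min c⁻¹ d⁻¹ with hm
  have hm0 : 0 < m := lt_min (inv_pos.2 hc') (inv_pos.2 hd')
  have h1 : m • e ≤ a := by
    calc m • e ≤ c⁻¹ • e := rsmul_mono_left (min_le_left _ _) he0
      _ ≤ c⁻¹ • (c • a) := rsmul_mono (inv_nonneg.2 hc) inf_le_left
      _ = a := by rw [smul_smul, inv_mul_cancel₀ hc'.ne', one_smul]
  have h2 : m • e ≤ b := by
    calc m • e ≤ d⁻¹ • e := rsmul_mono_left (min_le_right _ _) he0
      _ ≤ d⁻¹ • (d • b) := rsmul_mono (inv_nonneg.2 hd) inf_le_right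
      _ = b := by rw [smul_smul, inv_mul_cancel₀ hd'.ne', one_smul]
  have h3 : m • e ≤ 0 := hab ▸ le_inf h1 h2
  have h4 : e ≤ 0 := by
    have := rsmul_mono (inv_nonneg.2 hm0.le) h3
    rwa [smul_smul, inv_mul_cancel₀ hm0.ne', one_smul, smul_zero] at this
  exact le_antisymm h4 he0

private lemma posPart_le_abs' (x : E) : x⁺ ≤ |x| := by
  rw [posPart_def]
  exact sup_le (le_abs_self x) (abs_nonneg x)

/-- The normalized positive parts of a disjoint set form a disjoint normalized
subset of the positive cone. -/
private lemma normalized_posParts (D : Set E) (hD : DisjointSet D) :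
    ((fun x : E => ‖x⁺‖⁻¹ • x⁺) '' {x ∈ D | x⁺ ≠ 0}) ⊆ {x | 0 ≤ x} ∧
    DisjointSet ((fun x : E => ‖x⁺‖⁻¹ • x⁺) '' {x ∈ D | x⁺ ≠ 0}) ∧
    ∀ u ∈ (fun x : E => ‖x⁺‖⁻¹ • x⁺) '' {x ∈ D | x⁺ ≠ 0}, ‖u‖ = 1 := by
  refine ⟨?_, ?_, ?_⟩
  · rintro u ⟨x, ⟨-, -⟩, rfl⟩
    exact rsmul_nonneg _ (inv_nonneg.2 (norm_nonneg _)) _ (posPart_nonneg x)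
  · rintro u ⟨x, ⟨hxD, hx0⟩, rfl⟩ v ⟨y, ⟨hyD, hy0⟩, rfl⟩ huv
    by_cases hxy : x = y
    · exact absurd (hxy ▸ rfl) huv
    have hinf : x⁺ ⊓ y⁺ = 0 := by
      refine le_antisymm ?_ (le_inf (posPart_nonneg x) (posPart_nonneg y))
      calc x⁺ ⊓ y⁺ ≤ |x| ⊓ |y| := inf_le_inf (posPart_le_abs' x) (posPart_le_abs' y)
        _ = 0 := hD x hxD y hyD hxy
    have h1 : 0 ≤ ‖x⁺‖⁻¹ • x⁺ := rsmul_nonneg _ (inv_nonneg.2 (norm_nonneg _)) _ (posPart_nonneg x)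
    have h2 : 0 ≤ ‖y⁺‖⁻¹ • y⁺ := rsmul_nonneg _ (inv_nonneg.2 (norm_nonneg _)) _ (posPart_nonneg y)
    rw [abs_of_nonneg h1, abs_of_nonneg h2]
    exact inf_smul_eq_zero (posPart_nonneg x) (posPart_nonneg y) hinf
      (inv_nonneg.2 (norm_nonneg _)) (inv_nonneg.2 (norm_nonneg _))
  · rintro u ⟨x, ⟨-, hx0⟩, rfl⟩
    rw [norm_smul, norm_inv, norm_norm, inv_mul_cancel₀ (norm_ne_zero_iff.2 hx0)]

end Aux

/-- If `T` maps every disjoint normalized subset of the positive cone onto a relatively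
compact set, then `T` maps every disjoint bounded set onto a relatively compact set. -/
theorem dCompact_of_pos_normalized {E Y : Type*}
    [NormedAddCommGroup E] [Lattice E] [IsOrderedAddMonoid E] [HasSolidNorm E] [NormedSpace ℝ E] [CompleteSpace E]
    [NormedAddCommGroup Y] [NormedSpace ℝ Y] [CompleteSpace Y]
    (T : E →L[ℝ] Y)
    (h : ∀ D : Set E, D ⊆ {x | 0 ≤ x} → DisjointSet D → (∀ x ∈ D, ‖x‖ = 1) →
      IsCompact (closure (T '' D))) :
    ∀ D : Set E, DisjointSet D → IsBounded D → IsCompact (closure (T '' D)) := by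
  intro D hD hbdd
  obtain ⟨M, hM⟩ := isBounded_iff_forall_norm_le.1 hbdd
  set M' : ℝ := max M 0 with hM'
  -- the disjoint set of negatives
  have hDneg : DisjointSet ((fun x : E => -x) '' D) := by
    rintro u ⟨x, hx, rfl⟩ v ⟨y, hy, rfl⟩ huv
    rw [abs_neg, abs_neg]
    exact hD x hx y hy (fun hxy => huv (by rw [hxy]))
  -- the two normalized disjoint positive sets
  set P : Set E := (fun x : E => ‖x⁺‖⁻¹ • x⁺) '' {x ∈ D | x⁺ ≠ 0} with hP
  set Q : Set E := (fun x : E => ‖x⁺‖⁻¹ • x⁺) '' {x ∈ (fun x : E => -x) '' D | x⁺ ≠ 0} with hQ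
  obtain ⟨hP1, hP2, hP3⟩ := normalized_posParts D hD
  obtain ⟨hQ1, hQ2, hQ3⟩ := normalized_posParts ((fun x : E => -x) '' D) hDneg
  have hK1 : IsCompact (closure (T '' P) ∪ {0}) := (h P hP1 hP2 hP3).union isCompact_singleton
  have hK2 : IsCompact (closure (T '' Q) ∪ {0}) := (h Q hQ1 hQ2 hQ3).union isCompact_singleton
  set K1 := closure (T '' P) ∪ {0} with hK1d
  set K2 := closure (T '' Q) ∪ {0} with hK2d
  -- the compact set containing T '' D
  set F : (ℝ × Y) × ℝ × Y → Y := fun p => p.1.1 • p.1.2 - p.2.1 • p.2.2 with hF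
  have hFc : Continuous F := by
    apply Continuous.sub
    · exact (continuous_fst.fst.smul continuous_fst.snd)
    · exact (continuous_snd.fst.smul continuous_snd.snd)
  set C : Set Y := F '' ((Set.Icc (0 : ℝ) M' ×ˢ K1) ×ˢ (Set.Icc (0 : ℝ) M' ×ˢ K2)) with hC
  have hCcompact : IsCompact C :=
    (((isCompact_Icc.prod hK1).prod (isCompact_Icc.prod hK2)).image hFc)
  -- T '' D ⊆ C
  have hsub : T '' D ⊆ C := by
    rintro - ⟨x, hx, rfl⟩
    have hxM : ‖x‖ ≤ M := hM x hx
    -- positive part data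
    have hTpos : ∃ ya ∈ K1, ∃ a ∈ Set.Icc (0 : ℝ) M', T x⁺ = a • ya := by
      by_cases h0 : x⁺ = 0
      · exact ⟨0, Or.inr rfl, 0, ⟨le_refl 0, le_max_right M 0⟩, by rw [h0, map_zero, zero_smul]⟩
      · refine ⟨T (‖x⁺‖⁻¹ • x⁺), Or.inl (subset_closure ⟨_, ⟨x, ⟨hx, h0⟩, rfl⟩, rfl⟩),
          ‖x⁺‖, ⟨norm_nonneg _, ?_⟩, ?_⟩
        · refine le_trans ?_ (le_max_left M 0)
          refine le_trans (norm_le_norm_of_abs_le_abs ?_) hxM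
          rw [abs_of_nonneg (posPart_nonneg x)]
          exact posPart_le_abs' x
        · rw [← map_smul, smul_smul, mul_inv_cancel₀ (norm_ne_zero_iff.2 h0), one_smul]
    have hTneg : ∃ zb ∈ K2, ∃ b ∈ Set.Icc (0 : ℝ) M', T x⁻ = b • zb := by
      by_cases h0 : x⁻ = 0
      · exact ⟨0, Or.inr rfl, 0, ⟨le_refl 0, le_max_right M 0⟩, by rw [h0, map_zero, zero_smul]⟩
      · have h0' : (-x)⁺ ≠ 0 := by rwa [posPart_neg]
        refine ⟨T (‖(-x)⁺‖⁻¹ • (-x)⁺), Or.inl (subset_closure ⟨_, ⟨-x, ⟨⟨x, hx, rfl⟩, h0'⟩, rfl⟩, rfl⟩),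
          ‖x⁻‖, ⟨norm_nonneg _, ?_⟩, ?_⟩
        · refine le_trans ?_ (le_max_left M 0)
          refine le_trans (norm_le_norm_of_abs_le_abs ?_) hxM
          rw [abs_of_nonneg (negPart_nonneg x), ← posPart_neg, ← abs_neg]
          exact posPart_le_abs' (-x)
        · rw [posPart_neg, ← map_smul, smul_smul, mul_inv_cancel₀ (norm_ne_zero_iff.2 h0),
            one_smul]
    obtain ⟨ya, hya, a, ha, hTa⟩ := hTpos
    obtain ⟨zb, hzb, b, hb, hTb⟩ := hTneg
    refine ⟨((a, ya), (b, zb)), ⟨⟨ha, hya⟩, ⟨hb, hzb⟩⟩, ?_⟩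
    show a • ya - b • zb = T x
    rw [← hTa, ← hTb, ← map_sub, posPart_sub_negPart]
  exact hCcompact.of_isClosed_subset isClosed_closure
    (closure_minimal hsub hCcompact.isClosed)
end
end

section
/- Let E be a Banach lattice, Y a Banach space, and suppose T_n : E → Y are d-weakly compact operators converging to T in operator norm. Then T is d-weakly compact. -/
open Filter Topology Bornology Pointwise

noncomputable section

/-- A subset of a normed space is relatively weakly compact if its closure in the
weak topology is compact. -/
def RelWeaklyCompact {Y : Type*} [NormedAddCommGroup Y] [NormedSpace ℝ Y] (A : Set Y) : Prop :=
  IsCompact (closure (toWeakSpace ℝ Y '' A))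

/-- A d-weakly compact operator: maps every disjoint bounded set to a relatively weakly
compact set. -/
def DWeaklyCompact {E Y : Type*} [NormedAddCommGroup E] [Lattice E] [IsOrderedAddMonoid E] [HasSolidNorm E] [NormedSpace ℝ E]
    [NormedAddCommGroup Y] [NormedSpace ℝ Y] (T : E →L[ℝ] Y) : Prop :=
  ∀ D : Set E, DisjointSet D → IsBounded D → RelWeaklyCompact (T '' D)

section Grothendieck

variable {Y : Type*} [NormedAddCommGroup Y] [NormedSpace ℝ Y]

/-- The canonical map into the bidual, viewed as a map to the weak-star dual of the dual. -/
def iotaW : Y → WeakDual ℝ (StrongDual ℝ Y) := fun y =>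
  NormedSpace.inclusionInDoubleDual ℝ Y y

lemma iotaW_norm (y : Y) : ‖WeakDual.toStrongDual (iotaW y)‖ = ‖y‖ :=
  (NormedSpace.inclusionInDoubleDualLi ℝ (E := Y)).norm_map y

lemma iotaW_continuous : Continuous (fun y : WeakSpace ℝ Y => iotaW (Y := Y) y) := by
  apply WeakBilin.continuous_of_continuous_eval
  intro g
  exact WeakBilin.eval_continuous (topDualPairing ℝ Y).flip g

lemma iotaW_isEmbedding : Topology.IsEmbedding (fun y : WeakSpace ℝ Y => iotaW (Y := Y) y) := by
  refine Topology.IsEmbedding.of_comp iotaW_continuous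
    (WeakBilin.coeFn_continuous (topDualPairing ℝ (StrongDual ℝ Y))) ?_
  have hinj : Function.Injective ((topDualPairing ℝ Y).flip) := by
    intro y₁ y₂ h
    exact (NormedSpace.eq_iff_forall_dual_eq ℝ).mpr fun g => LinearMap.congr_fun h g
  exact WeakBilin.isEmbedding hinj

/-- Grothendieck's lemma: a bounded set which can be approximated arbitrarily well by
relatively weakly compact sets is relatively weakly compact. -/
lemma relWeaklyCompact_of_approx [CompleteSpace Y] {A : Set Y} (hA : IsBounded A)
    (h : ∀ ε : ℝ, 0 < ε → ∃ B : Set Y, RelWeaklyCompact B ∧ ∀ a ∈ A, ∃ b ∈ B, ‖a - b‖ ≤ ε) :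
    RelWeaklyCompact A := by
  obtain ⟨R, hR⟩ := isBounded_iff_forall_norm_le.mp hA
  set f : WeakSpace ℝ Y → WeakDual ℝ (StrongDual ℝ Y) := fun y => iotaW (Y := Y) y with hf
  set S : Set (WeakSpace ℝ Y) := toWeakSpace ℝ Y '' A with hS
  set L : Set (WeakDual ℝ (StrongDual ℝ Y)) := closure (f '' S) with hL
  -- L is compact by Banach-Alaoglu
  have hSub : f '' S ⊆ WeakDual.toStrongDual ⁻¹' Metric.closedBall 0 R := by
    rintro - ⟨-, ⟨a, ha, rfl⟩, rfl⟩
    simp only [Set.mem_preimage, Metric.mem_closedBall, dist_zero_right]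
    refine (dist_zero_right (E := StrongDual ℝ (StrongDual ℝ Y)) _).trans_le ?_
    calc ‖WeakDual.toStrongDual (f (toWeakSpace ℝ Y a))‖
        = ‖a‖ := iotaW_norm a
      _ ≤ R := hR a ha
  have hLcomp : IsCompact L :=
    (WeakDual.isCompact_closedBall (0 : StrongDual ℝ (StrongDual ℝ Y)) R
      ).of_isClosed_subset isClosed_closure
      (closure_minimal hSub (WeakDual.isClosed_closedBall 0 R))
  -- every element of L is within ε of the range of iotaW, for every ε > 0
  have happrox : ∀ x ∈ L, ∀ ε : ℝ, 0 < ε →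
      ∃ y : Y, ‖WeakDual.toStrongDual x - NormedSpace.inclusionInDoubleDual ℝ Y y‖ ≤ ε := by
    intro x hx ε hε
    obtain ⟨B, hBcomp, hBapprox⟩ := h ε hε
    set C : Set (WeakDual ℝ (StrongDual ℝ Y)) :=
      f '' closure (toWeakSpace ℝ Y '' B) with hC
    have hCcomp : IsCompact C := hBcomp.image iotaW_continuous
    set Bl : Set (WeakDual ℝ (StrongDual ℝ Y)) :=
      WeakDual.toStrongDual ⁻¹' Metric.closedBall 0 ε with hBl
    have hBlcomp : IsCompact Bl := WeakDual.isCompact_closedBall 0 ε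
    have hsub2 : f '' S ⊆ C + Bl := by
      rintro - ⟨-, ⟨a, ha, rfl⟩, rfl⟩
      obtain ⟨b, hb, hab⟩ := hBapprox a ha
      refine Set.mem_add.mpr ⟨f (toWeakSpace ℝ Y b),
        Set.mem_image_of_mem f (subset_closure (Set.mem_image_of_mem _ hb)),
        f (toWeakSpace ℝ Y a) - f (toWeakSpace ℝ Y b), ?_, by abel⟩
      simp only [hBl, Set.mem_preimage, Metric.mem_closedBall, dist_zero_right]
      have : WeakDual.toStrongDual (f (toWeakSpace ℝ Y a) - f (toWeakSpace ℝ Y b))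
          = WeakDual.toStrongDual (iotaW (a - b)) := by
        rw [map_sub]
        exact (map_sub (NormedSpace.inclusionInDoubleDual ℝ Y) a b).symm
      rw [this]
      exact (dist_zero_right (E := StrongDual ℝ (StrongDual ℝ Y)) _).trans_le ((iotaW_norm _).trans_le hab)
    have hCBclosed : IsClosed (C + Bl) := (hCcomp.add hBlcomp).isClosed
    have hxCB : x ∈ C + Bl := closure_minimal hsub2 hCBclosed hx
    obtain ⟨c, hc, g, hg, hsum⟩ := Set.mem_add.mp hxCB
    obtain ⟨w, -, rfl⟩ := hc
    refine ⟨(toWeakSpace ℝ Y).symm w, ?_⟩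
    have hxw : WeakDual.toStrongDual x - NormedSpace.inclusionInDoubleDual ℝ Y
        ((toWeakSpace ℝ Y).symm w) = WeakDual.toStrongDual g := by
      have h1 : WeakDual.toStrongDual x = WeakDual.toStrongDual (f w) +
          WeakDual.toStrongDual g := by rw [← map_add, hsum]
      have h2 : WeakDual.toStrongDual (f w) = NormedSpace.inclusionInDoubleDual ℝ Y
          ((toWeakSpace ℝ Y).symm w) := rfl
      rw [h1, h2]
      abel
    rw [hxw]
    rw [hBl] at hg
    exact (dist_zero_right (E := StrongDual ℝ (StrongDual ℝ Y)) _).symm.trans_le hg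
  -- hence L is contained in the range of f, by completeness of Y
  have hLrange : L ⊆ Set.range f := by
    intro x hx
    have hclosed : IsClosed (Set.range (NormedSpace.inclusionInDoubleDual ℝ Y)) := by
      have h1 : Isometry (NormedSpace.inclusionInDoubleDual ℝ Y) :=
        (NormedSpace.inclusionInDoubleDualLi ℝ (E := Y)).isometry
      exact h1.isClosedEmbedding.isClosed_range
    have hmem : WeakDual.toStrongDual x ∈
        closure (Set.range (NormedSpace.inclusionInDoubleDual ℝ Y)) := by
      refine (Metric.mem_closure_iff (α := StrongDual ℝ (StrongDual ℝ Y))).mpr ?_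
      intro ε hε
      obtain ⟨y, hy⟩ := happrox x hx (ε / 2) (by positivity)
      refine ⟨NormedSpace.inclusionInDoubleDual ℝ Y y, Set.mem_range_self y, ?_⟩
      refine (dist_eq_norm (E := StrongDual ℝ (StrongDual ℝ Y)) _ _).trans_lt (hy.trans_lt ?_)
      linarith
    rw [hclosed.closure_eq] at hmem
    obtain ⟨y, hy⟩ := hmem
    exact ⟨toWeakSpace ℝ Y y, by
      show WeakDual.toStrongDual (f (toWeakSpace ℝ Y y)) = WeakDual.toStrongDual x
      exact hy⟩
  -- conclude
  have hpre : IsCompact (f ⁻¹' L) := by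
    rw [iotaW_isEmbedding.isCompact_iff, Set.image_preimage_eq_of_subset hLrange]
    exact hLcomp
  refine hpre.of_isClosed_subset isClosed_closure
    (closure_minimal ?_ (hLcomp.isClosed.preimage iotaW_continuous))
  intro s hs
  exact subset_closure (Set.mem_image_of_mem f hs)

end Grothendieck

/-- The uniform limit of d-weakly compact operators is d-weakly compact. -/
theorem dWeaklyCompact_of_tendsto {E Y : Type*}
    [NormedAddCommGroup E] [Lattice E] [IsOrderedAddMonoid E] [HasSolidNorm E] [NormedSpace ℝ E] [CompleteSpace E]
    [NormedAddCommGroup Y] [NormedSpace ℝ Y] [CompleteSpace Y]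
    (T : ℕ → E →L[ℝ] Y) (T₀ : E →L[ℝ] Y)
    (hT : ∀ n, DWeaklyCompact (T n))
    (hlim : Tendsto (fun n => ‖T n - T₀‖) atTop (𝓝 0)) :
    DWeaklyCompact T₀ := by
  intro D hDdisj hDbdd
  obtain ⟨M, hM⟩ := isBounded_iff_forall_norm_le.mp hDbdd
  set M' := max M 0 with hM'
  have hMnn : ∀ x ∈ D, ‖x‖ ≤ M' := fun x hx => (hM x hx).trans (le_max_left _ _)
  have hM'0 : (0 : ℝ) ≤ M' := le_max_right _ _
  apply relWeaklyCompact_of_approx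
  · refine isBounded_iff_forall_norm_le.mpr ⟨‖T₀‖ * M', ?_⟩
    rintro - ⟨x, hx, rfl⟩
    calc ‖T₀ x‖ ≤ ‖T₀‖ * ‖x‖ := T₀.le_opNorm x
      _ ≤ ‖T₀‖ * M' := mul_le_mul_of_nonneg_left (hMnn x hx) (norm_nonneg _)
  · intro ε hε
    have hδ : 0 < ε / (M' + 1) := by positivity
    obtain ⟨n, hn⟩ := (hlim.eventually (gt_mem_nhds hδ)).exists
    refine ⟨T n '' D, hT n D hDdisj hDbdd, ?_⟩
    rintro - ⟨x, hx, rfl⟩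
    refine ⟨T n x, Set.mem_image_of_mem _ hx, ?_⟩
    have hrw : T₀ x - T n x = -((T n - T₀) x) := by
      simp [ContinuousLinearMap.sub_apply]
    calc ‖T₀ x - T n x‖ = ‖(T n - T₀) x‖ := by rw [hrw, norm_neg]
      _ ≤ ‖T n - T₀‖ * ‖x‖ := (T n - T₀).le_opNorm x
      _ ≤ (ε / (M' + 1)) * M' :=
          mul_le_mul hn.le (hMnn x hx) (norm_nonneg _) hδ.le
      _ ≤ ε := by
          have hcancel : (ε / (M' + 1)) * (M' + 1) = ε :=
            div_mul_cancel₀ ε (by positivity)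
          nlinarith
end
end

section
/- Let E, F be Banach lattices with E' a KB-space, and let 0 ≤ S ≤ T be operators from E to F. If T is d-weakly compact then S is d-weakly compact. -/
open Filter Topology Bornology

noncomputable section

/-- A functional on `E` is positive if it is nonnegative on the positive cone. -/
def DualPos {E : Type*} [NormedAddCommGroup E] [Lattice E] [IsOrderedAddMonoid E] [HasSolidNorm E] [NormedSpace ℝ E]
    (f : StrongDual ℝ E) : Prop :=
  ∀ x : E, 0 ≤ x → 0 ≤ f x

/-- The order on the dual: `f ≤ g` iff `f x ≤ g x` for all `x ≥ 0`. -/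
def DualLE {E : Type*} [NormedAddCommGroup E] [Lattice E] [IsOrderedAddMonoid E] [HasSolidNorm E] [NormedSpace ℝ E]
    (f g : StrongDual ℝ E) : Prop :=
  ∀ x : E, 0 ≤ x → f x ≤ g x

/-- The dual `E'` is a KB-space: every increasing norm-bounded sequence of positive
functionals is norm convergent. -/
def DualKB (E : Type*) [NormedAddCommGroup E] [Lattice E] [IsOrderedAddMonoid E] [HasSolidNorm E] [NormedSpace ℝ E] : Prop :=
  ∀ f : ℕ → StrongDual ℝ E, (∀ n, DualPos (f n)) →
    (∀ n, DualLE (f n) (f (n + 1))) → (∃ M : ℝ, ∀ n, ‖f n‖ ≤ M) →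
    ∃ g : StrongDual ℝ E, Tendsto (fun n => ‖f n - g‖) atTop (𝓝 0)

section LatticeLemmas
variable {E : Type*} [NormedAddCommGroup E] [Lattice E] [IsOrderedAddMonoid E] [HasSolidNorm E]

theorem my_add_inf_le {a b c : E} (ha : 0 ≤ a) (hb : 0 ≤ b) (hc : 0 ≤ c) :
    (a + b) ⊓ c ≤ a ⊓ c + b ⊓ c := by
  have h1 : a ⊓ c + b ⊓ c = ((a + b) ⊓ (c + b)) ⊓ ((a + c) ⊓ (c + c)) := by
    rw [inf_add a c (b ⊓ c), add_inf b c a, add_inf b c c]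
    ac_rfl
  rw [h1]
  refine le_inf (le_inf inf_le_left ?_) (le_inf ?_ ?_)
  · exact le_trans inf_le_right (le_add_of_nonneg_right hb)
  · exact le_trans inf_le_right (le_add_of_nonneg_left ha)
  · exact le_trans inf_le_right (le_add_of_nonneg_left hc)

theorem my_disj_add {a b c : E} (ha : 0 ≤ a) (hb : 0 ≤ b) (hc : 0 ≤ c)
    (hac : a ⊓ c = 0) (hbc : b ⊓ c = 0) : (a + b) ⊓ c = 0 := by
  refine le_antisymm ?_ (le_inf (add_nonneg ha hb) hc)
  calc (a + b) ⊓ c ≤ a ⊓ c + b ⊓ c := my_add_inf_le ha hb hc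
  _ = 0 := by rw [hac, hbc, add_zero]

theorem my_disj_nsmul {a c : E} (ha : 0 ≤ a) (hc : 0 ≤ c) (h : a ⊓ c = 0) (k : ℕ) :
    (k • a) ⊓ c = 0 := by
  induction k with
  | zero => rw [zero_nsmul]; exact inf_eq_left.mpr hc
  | succ n ih => rw [succ_nsmul]; exact my_disj_add (nsmul_nonneg ha n) ha hc ih h

theorem my_disj_nsmul₂ {a c : E} (ha : 0 ≤ a) (hc : 0 ≤ c) (h : a ⊓ c = 0) (k l : ℕ) :
    (k • a) ⊓ (l • c) = 0 := by
  have d1 : (k • a) ⊓ c = 0 := my_disj_nsmul ha hc h k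
  rw [inf_comm]
  exact my_disj_nsmul hc (nsmul_nonneg ha k) (by rw [inf_comm]; exact d1) l

/-- sum of pairwise disjoint positive elements bounded by y is bounded by y -/
theorem my_sum_inf_zero {ι : Type*} (s : Finset ι) (w : ι → E) (c : E)
    (hw : ∀ i ∈ s, 0 ≤ w i) (hc : 0 ≤ c) (hd : ∀ i ∈ s, w i ⊓ c = 0) :
    (∑ i ∈ s, w i) ⊓ c = 0 := by
  induction s using Finset.cons_induction with
  | empty => rw [Finset.sum_empty]; exact inf_eq_left.mpr hc
  | cons a s has ih =>
    rw [Finset.sum_cons]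
    exact my_disj_add (hw a (Finset.mem_cons_self a s))
      (Finset.sum_nonneg fun i hi => hw i (Finset.mem_cons_of_mem hi)) hc
      (hd a (Finset.mem_cons_self a s))
      (ih (fun i hi => hw i (Finset.mem_cons_of_mem hi)) (fun i hi => hd i (Finset.mem_cons_of_mem hi)))

theorem my_sum_le_of_disjoint {ι : Type*} [DecidableEq ι] (s : Finset ι) (w : ι → E) (y : E) (hy : 0 ≤ y)
    (hw : ∀ i ∈ s, 0 ≤ w i) (hle : ∀ i ∈ s, w i ≤ y)
    (hd : ∀ i ∈ s, ∀ j ∈ s, i ≠ j → w i ⊓ w j = 0) :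
    ∑ i ∈ s, w i ≤ y := by
  induction s using Finset.cons_induction with
  | empty =>
    simpa using hy
  | cons a s has ih =>
    rw [Finset.sum_cons]
    have hsum : (∑ i ∈ s, w i) ⊓ w a = 0 := by
      refine my_sum_inf_zero s w (w a) (fun i hi => hw i (Finset.mem_cons_of_mem hi))
        (hw a (Finset.mem_cons_self a s)) (fun i hi => ?_)
      exact hd i (Finset.mem_cons_of_mem hi) a (Finset.mem_cons_self a s)
        (fun h => has (h ▸ hi))
    have h1 : w a + ∑ i ∈ s, w i = w a ⊔ (∑ i ∈ s, w i) + w a ⊓ (∑ i ∈ s, w i) := by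
      rw [← inf_add_sup]; ac_rfl
    rw [h1, inf_comm, hsum, add_zero]
    refine sup_le (hle a (Finset.mem_cons_self a s))
      (ih (fun i hi => hw i (Finset.mem_cons_of_mem hi)) (fun i hi => hle i (Finset.mem_cons_of_mem hi))
        (fun i hi j hj hij => hd i (Finset.mem_cons_of_mem hi) j (Finset.mem_cons_of_mem hj) hij))

end LatticeLemmas

section QDev
variable {E : Type*} [NormedAddCommGroup E] [Lattice E] [IsOrderedAddMonoid E] [HasSolidNorm E] [NormedSpace ℝ E]

/-- The "modulus value" `|φ|(y) = sup { φ z : |z| ≤ y }` as a plain function. -/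
noncomputable def Qf (φ : E →L[ℝ] ℝ) (y : E) : ℝ := sSup ((fun z => φ z) '' {z | |z| ≤ y})

theorem Qf_mem_zero (φ : E →L[ℝ] ℝ) {y : E} (hy : 0 ≤ y) :
    (0 : ℝ) ∈ (fun z => φ z) '' {z | |z| ≤ y} :=
  ⟨0, by simpa using hy, by simp⟩

theorem Qf_bdd (φ : E →L[ℝ] ℝ) {y : E} (hy : 0 ≤ y) :
    BddAbove ((fun z => φ z) '' {z | |z| ≤ y}) := by
  refine ⟨‖φ‖ * ‖y‖, fun r hr => ?_⟩
  obtain ⟨z, hz, rfl⟩ := hr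
  have hzy : ‖z‖ ≤ ‖y‖ := norm_le_norm_of_abs_le_abs (by rwa [abs_of_nonneg hy])
  calc φ z ≤ |φ z| := le_abs_self _
  _ ≤ ‖φ‖ * ‖z‖ := by simpa using φ.le_opNorm z
  _ ≤ ‖φ‖ * ‖y‖ := by nlinarith [norm_nonneg φ]

theorem le_Qf (φ : E →L[ℝ] ℝ) {y z : E} (hy : 0 ≤ y) (hz : |z| ≤ y) : φ z ≤ Qf φ y :=
  le_csSup (Qf_bdd φ hy) ⟨z, hz, rfl⟩

theorem Qf_nonneg (φ : E →L[ℝ] ℝ) {y : E} (hy : 0 ≤ y) : 0 ≤ Qf φ y :=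
  le_csSup (Qf_bdd φ hy) (Qf_mem_zero φ hy)

theorem Qf_le (φ : E →L[ℝ] ℝ) {y : E} (hy : 0 ≤ y) : Qf φ y ≤ ‖φ‖ * ‖y‖ := by
  refine csSup_le ⟨0, Qf_mem_zero φ hy⟩ (fun r hr => ?_)
  obtain ⟨z, hz, rfl⟩ := hr
  have hzy : ‖z‖ ≤ ‖y‖ := norm_le_norm_of_abs_le_abs (by rwa [abs_of_nonneg hy])
  calc φ z ≤ |φ z| := le_abs_self _
  _ ≤ ‖φ‖ * ‖z‖ := by simpa using φ.le_opNorm z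
  _ ≤ ‖φ‖ * ‖y‖ := by nlinarith [norm_nonneg φ]

theorem Qf_mono (φ : E →L[ℝ] ℝ) {y₁ y₂ : E} (hy₁ : 0 ≤ y₁) (h : y₁ ≤ y₂) :
    Qf φ y₁ ≤ Qf φ y₂ := by
  refine csSup_le ⟨0, Qf_mem_zero φ hy₁⟩ (fun r hr => ?_)
  obtain ⟨z, hz, rfl⟩ := hr
  exact le_Qf φ (hy₁.trans h) (hz.trans h)

theorem Qf_zero (φ : E →L[ℝ] ℝ) : Qf φ 0 = 0 := by
  refine le_antisymm (csSup_le ⟨0, Qf_mem_zero φ le_rfl⟩ (fun r hr => ?_)) (Qf_nonneg φ le_rfl)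
  obtain ⟨z, hz, rfl⟩ := hr
  have h1 : z ≤ 0 := le_trans (le_abs_self z) hz
  have h2 : -z ≤ 0 := le_trans (neg_le_abs z) hz
  have : z = 0 := le_antisymm h1 (by simpa using h2)
  simp [this]

theorem Qf_superadd (φ : E →L[ℝ] ℝ) {y₁ y₂ : E} (hy₁ : 0 ≤ y₁) (hy₂ : 0 ≤ y₂) :
    Qf φ y₁ + Qf φ y₂ ≤ Qf φ (y₁ + y₂) := by
  have key : ∀ z₁ ∈ {z : E | |z| ≤ y₁}, ∀ z₂ ∈ {z : E | |z| ≤ y₂},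
      φ z₁ + φ z₂ ≤ Qf φ (y₁ + y₂) := by
    intro z₁ h₁ z₂ h₂
    rw [← map_add]
    exact le_Qf φ (add_nonneg hy₁ hy₂) ((abs_add_le z₁ z₂).trans (add_le_add h₁ h₂))
  have h2 : ∀ z₁ ∈ {z : E | |z| ≤ y₁}, Qf φ y₂ ≤ Qf φ (y₁ + y₂) - φ z₁ := by
    intro z₁ h₁
    refine csSup_le ⟨0, Qf_mem_zero φ hy₂⟩ (fun r hr => ?_)
    obtain ⟨z₂, h₂, rfl⟩ := hr
    linarith [key z₁ h₁ z₂ h₂]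
  have h3 : Qf φ y₁ ≤ Qf φ (y₁ + y₂) - Qf φ y₂ := by
    refine csSup_le ⟨0, Qf_mem_zero φ hy₁⟩ (fun r hr => ?_)
    obtain ⟨z₁, h₁, rfl⟩ := hr
    linarith [h2 z₁ h₁]
  linarith

theorem Qf_subadd (φ : E →L[ℝ] ℝ) {y₁ y₂ : E} (hy₁ : 0 ≤ y₁) (hy₂ : 0 ≤ y₂) :
    Qf φ (y₁ + y₂) ≤ Qf φ y₁ + Qf φ y₂ := by
  refine csSup_le ⟨0, Qf_mem_zero φ (add_nonneg hy₁ hy₂)⟩ (fun r hr => ?_)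
  obtain ⟨z, hz, rfl⟩ := hr
  -- Riesz decomposition
  set a₁ : E := z⁺ ⊓ y₁ with ha₁
  set a₂ : E := z⁺ - a₁ with ha₂
  set b₁ : E := z⁻ ⊓ y₁ with hb₁
  set b₂ : E := z⁻ - b₁ with hb₂
  have hzp : z⁺ ≤ y₁ + y₂ := le_trans (by
    rw [← posPart_add_negPart z]; exact le_add_of_nonneg_right (negPart_nonneg z)) hz
  have hzn : z⁻ ≤ y₁ + y₂ := le_trans (by
    rw [← posPart_add_negPart z]; exact le_add_of_nonneg_left (posPart_nonneg z)) hz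
  have ha₁0 : 0 ≤ a₁ := le_inf (posPart_nonneg z) hy₁
  have hb₁0 : 0 ≤ b₁ := le_inf (negPart_nonneg z) hy₁
  have ha₂eq : a₂ = 0 ⊔ (z⁺ - y₁) := by
    rw [ha₂, ha₁, sub_inf, sub_self]
  have hb₂eq : b₂ = 0 ⊔ (z⁻ - y₁) := by
    rw [hb₂, hb₁, sub_inf, sub_self]
  have ha₂0 : 0 ≤ a₂ := ha₂eq ▸ le_sup_left
  have hb₂0 : 0 ≤ b₂ := hb₂eq ▸ le_sup_left
  have ha₂y : a₂ ≤ y₂ := by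
    rw [ha₂eq]; exact sup_le hy₂ (sub_le_iff_le_add'.mpr hzp)
  have hb₂y : b₂ ≤ y₂ := by
    rw [hb₂eq]; exact sup_le hy₂ (sub_le_iff_le_add'.mpr hzn)
  have ha₁y : a₁ ≤ y₁ := inf_le_right
  have hb₁y : b₁ ≤ y₁ := inf_le_right
  have habs : ∀ a b y : E, 0 ≤ a → 0 ≤ b → a ≤ y → b ≤ y → |a - b| ≤ y := by
    intro a b y h0a h0b hay hby
    rw [← sup_sub_inf_eq_abs_sub b a]
    calc b ⊔ a - b ⊓ a ≤ b ⊔ a - 0 := by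
          have : (0:E) ≤ b ⊓ a := le_inf h0b h0a
          exact sub_le_sub_left this _
    _ = b ⊔ a := sub_zero _
    _ ≤ y := sup_le hby hay
  have h1 : |a₁ - b₁| ≤ y₁ := habs _ _ _ ha₁0 hb₁0 ha₁y hb₁y
  have h2 : |a₂ - b₂| ≤ y₂ := habs _ _ _ ha₂0 hb₂0 ha₂y hb₂y
  have hsum : (a₁ - b₁) + (a₂ - b₂) = z := by
    rw [ha₂, hb₂]
    conv_rhs => rw [← posPart_sub_negPart z]
    abel
  calc φ z = φ (a₁ - b₁) + φ (a₂ - b₂) := by rw [← map_add, hsum]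
  _ ≤ Qf φ y₁ + Qf φ y₂ := add_le_add (le_Qf φ hy₁ h1) (le_Qf φ hy₂ h2)

end QDev

section PDev
variable {E : Type*} [NormedAddCommGroup E] [Lattice E] [IsOrderedAddMonoid E] [HasSolidNorm E] [NormedSpace ℝ E]

/-- `Pf φ u y` is the "component of |φ| on the band generated by u", evaluated at `y`. -/
noncomputable def Pf (φ : E →L[ℝ] ℝ) (u : E) (y : E) : ℝ := ⨆ k : ℕ, Qf φ (y ⊓ k • u)

variable {φ : E →L[ℝ] ℝ} {u : E}

theorem Pf_term_nonneg (hu : 0 ≤ u) {y : E} (hy : 0 ≤ y) (k : ℕ) : 0 ≤ y ⊓ k • u :=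
  le_inf hy (nsmul_nonneg hu k)

theorem Pf_term_mono (hu : 0 ≤ u) {y : E} (hy : 0 ≤ y) :
    Monotone (fun k : ℕ => Qf φ (y ⊓ k • u)) := fun k l hkl =>
  Qf_mono φ (Pf_term_nonneg hu hy k) (inf_le_inf_left y (nsmul_le_nsmul_left hu hkl))

theorem Pf_term_le (hu : 0 ≤ u) {y : E} (hy : 0 ≤ y) (k : ℕ) :
    Qf φ (y ⊓ k • u) ≤ Qf φ y :=
  Qf_mono φ (Pf_term_nonneg hu hy k) inf_le_left

theorem Pf_bdd (hu : 0 ≤ u) {y : E} (hy : 0 ≤ y) :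
    BddAbove (Set.range (fun k : ℕ => Qf φ (y ⊓ k • u))) :=
  ⟨Qf φ y, by rintro r ⟨k, rfl⟩; exact Pf_term_le hu hy k⟩

theorem Pf_tendsto (hu : 0 ≤ u) {y : E} (hy : 0 ≤ y) :
    Tendsto (fun k : ℕ => Qf φ (y ⊓ k • u)) atTop (𝓝 (Pf φ u y)) :=
  tendsto_atTop_ciSup (Pf_term_mono hu hy) (Pf_bdd hu hy)

theorem Qf_le_Pf (hu : 0 ≤ u) {y : E} (hy : 0 ≤ y) (k : ℕ) :
    Qf φ (y ⊓ k • u) ≤ Pf φ u y :=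
  le_ciSup (Pf_bdd hu hy) k

theorem Pf_nonneg (hu : 0 ≤ u) {y : E} (hy : 0 ≤ y) : 0 ≤ Pf φ u y :=
  le_trans (Qf_nonneg φ (Pf_term_nonneg hu hy 0)) (Qf_le_Pf hu hy 0)

theorem Pf_le_Qf (hu : 0 ≤ u) {y : E} (hy : 0 ≤ y) : Pf φ u y ≤ Qf φ y :=
  ciSup_le (Pf_term_le hu hy)

theorem Pf_zero (hu : 0 ≤ u) : Pf φ u 0 = 0 := by
  have h : ∀ k : ℕ, (0 : E) ⊓ k • u = 0 := fun k => inf_eq_left.mpr (nsmul_nonneg hu k)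
  simp only [Pf, h, Qf_zero, ciSup_const]

theorem Pf_add (hu : 0 ≤ u) {a b : E} (ha : 0 ≤ a) (hb : 0 ≤ b) :
    Pf φ u (a + b) = Pf φ u a + Pf φ u b := by
  have hab : 0 ≤ a + b := add_nonneg ha hb
  have Ta := Pf_tendsto (φ := φ) hu ha
  have Tb := Pf_tendsto (φ := φ) hu hb
  have Tc := Pf_tendsto (φ := φ) hu hab
  have lim1 : Tendsto (fun k : ℕ => Qf φ (a ⊓ k • u) + Qf φ (b ⊓ k • u)) atTop
      (𝓝 (Pf φ u a + Pf φ u b)) := Ta.add Tb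
  refine le_antisymm ?_ ?_
  · refine le_of_tendsto_of_tendsto' Tc lim1 (fun k => ?_)
    have h1 : (a + b) ⊓ (k • u) ≤ a ⊓ k • u + b ⊓ k • u :=
      my_add_inf_le ha hb (nsmul_nonneg hu k)
    calc Qf φ ((a + b) ⊓ k • u) ≤ Qf φ (a ⊓ k • u + b ⊓ k • u) :=
          Qf_mono φ (Pf_term_nonneg hu hab k) h1
    _ ≤ Qf φ (a ⊓ k • u) + Qf φ (b ⊓ k • u) :=
          Qf_subadd φ (Pf_term_nonneg hu ha k) (Pf_term_nonneg hu hb k)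
  · refine le_of_tendsto lim1 (Eventually.of_forall (fun k => ?_))
    have h1 : a ⊓ k • u + b ⊓ k • u ≤ (a + b) ⊓ ((k + k) • u) := by
      rw [add_nsmul]
      exact le_inf (add_le_add inf_le_left inf_le_left)
        (add_le_add inf_le_right inf_le_right)
    calc Qf φ (a ⊓ k • u) + Qf φ (b ⊓ k • u) ≤ Qf φ (a ⊓ k • u + b ⊓ k • u) :=
          Qf_superadd φ (Pf_term_nonneg hu ha k) (Pf_term_nonneg hu hb k)
    _ ≤ Qf φ ((a + b) ⊓ (k + k) • u) := Qf_mono φ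
          (add_nonneg (Pf_term_nonneg hu ha k) (Pf_term_nonneg hu hb k)) h1
    _ ≤ Pf φ u (a + b) := Qf_le_Pf hu hab _

theorem norm_posPart_le (x : E) : ‖x⁺‖ ≤ ‖x‖ := by
  refine norm_le_norm_of_abs_le_abs ?_
  rw [abs_of_nonneg (posPart_nonneg x), ← posPart_add_negPart x]
  exact le_add_of_nonneg_right (negPart_nonneg x)

theorem norm_negPart_le (x : E) : ‖x⁻‖ ≤ ‖x‖ := by
  refine norm_le_norm_of_abs_le_abs ?_
  rw [abs_of_nonneg (negPart_nonneg x), ← posPart_add_negPart x]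
  exact le_add_of_nonneg_left (posPart_nonneg x)

/-- Additivity of the extension of `Pf`. -/
theorem hFun_hadd (φ : E →L[ℝ] ℝ) {u : E} (hu : 0 ≤ u) :
    ∀ x y : E, (fun x => Pf φ u x⁺ - Pf φ u x⁻) (x + y) =
      (fun x => Pf φ u x⁺ - Pf φ u x⁻) x + (fun x => Pf φ u x⁺ - Pf φ u x⁻) y := by
  have posPart_eq_add : ∀ a : E, a⁺ = a + a⁻ := fun a =>
    eq_add_of_sub_eq (posPart_sub_negPart a)
  intro x y
  have key : (x + y)⁺ + (x⁻ + y⁻) = (x + y)⁻ + (x⁺ + y⁺) := by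
    rw [posPart_eq_add (x + y), posPart_eq_add x, posPart_eq_add y]; abel
  have e1 : Pf φ u ((x + y)⁺ + (x⁻ + y⁻)) =
      Pf φ u (x + y)⁺ + (Pf φ u x⁻ + Pf φ u y⁻) := by
    rw [Pf_add hu (posPart_nonneg _) (add_nonneg (negPart_nonneg _) (negPart_nonneg _)),
      Pf_add hu (negPart_nonneg _) (negPart_nonneg _)]
  have e2 : Pf φ u ((x + y)⁻ + (x⁺ + y⁺)) =
      Pf φ u (x + y)⁻ + (Pf φ u x⁺ + Pf φ u y⁺) := by
    rw [Pf_add hu (negPart_nonneg _) (add_nonneg (posPart_nonneg _) (posPart_nonneg _)),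
      Pf_add hu (posPart_nonneg _) (posPart_nonneg _)]
  rw [key] at e1
  rw [e2] at e1
  simp only
  linarith

theorem hFun_bound (φ : E →L[ℝ] ℝ) {u : E} (hu : 0 ≤ u) (x : E) :
    ‖Pf φ u x⁺ - Pf φ u x⁻‖ ≤ 2 * ‖φ‖ * ‖x‖ := by
  have h1 : 0 ≤ Pf φ u x⁺ := Pf_nonneg hu (posPart_nonneg x)
  have h2 : 0 ≤ Pf φ u x⁻ := Pf_nonneg hu (negPart_nonneg x)
  have h3 : Pf φ u x⁺ ≤ ‖φ‖ * ‖x‖ :=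
    le_trans (le_trans (Pf_le_Qf hu (posPart_nonneg x)) (Qf_le φ (posPart_nonneg x)))
      (by nlinarith [norm_posPart_le x, norm_nonneg φ])
  have h4 : Pf φ u x⁻ ≤ ‖φ‖ * ‖x‖ :=
    le_trans (le_trans (Pf_le_Qf hu (negPart_nonneg x)) (Qf_le φ (negPart_nonneg x)))
      (by nlinarith [norm_negPart_le x, norm_nonneg φ])
  rw [Real.norm_eq_abs, abs_le]
  constructor <;> nlinarith

theorem hFun_cont (φ : E →L[ℝ] ℝ) {u : E} (hu : 0 ≤ u) :
    Continuous ⇑(AddMonoidHom.mk' (fun x => Pf φ u x⁺ - Pf φ u x⁻) (hFun_hadd φ hu)) := by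
  have := ((AddMonoidHom.mk' (fun x => Pf φ u x⁺ - Pf φ u x⁻)
    (hFun_hadd φ hu)).mkNormedAddGroupHom (2 * ‖φ‖) (fun x => hFun_bound φ hu x)).continuous
  exact this

/-- `Pf` extended to a continuous linear functional. -/
noncomputable def hFun (φ : E →L[ℝ] ℝ) {u : E} (hu : 0 ≤ u) : E →L[ℝ] ℝ :=
  AddMonoidHom.toRealLinearMap
    (AddMonoidHom.mk' (fun x => Pf φ u x⁺ - Pf φ u x⁻) (hFun_hadd φ hu)) (hFun_cont φ hu)

theorem hFun_apply (φ : E →L[ℝ] ℝ) {u : E} (hu : 0 ≤ u) (x : E) :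
    hFun φ hu x = Pf φ u x⁺ - Pf φ u x⁻ := by
  have := AddMonoidHom.coe_toRealLinearMap
    (AddMonoidHom.mk' (fun x => Pf φ u x⁺ - Pf φ u x⁻) (hFun_hadd φ hu)) (hFun_cont φ hu)
  exact congrFun this x

theorem hFun_apply_nonneg (φ : E →L[ℝ] ℝ) {u : E} (hu : 0 ≤ u) {x : E} (hx : 0 ≤ x) :
    hFun φ hu x = Pf φ u x := by
  rw [hFun_apply φ hu x, posPart_eq_self.mpr hx, negPart_eq_zero.mpr hx, Pf_zero hu, sub_zero]

end PDev

section WeakNull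
variable {E : Type*} [NormedAddCommGroup E] [Lattice E] [IsOrderedAddMonoid E] [HasSolidNorm E] [NormedSpace ℝ E]

theorem Qf_sum_finset (φ : E →L[ℝ] ℝ) {ι : Type*} (s : Finset ι) (w : ι → E)
    (hw : ∀ i ∈ s, 0 ≤ w i) :
    ∑ i ∈ s, Qf φ (w i) ≤ Qf φ (∑ i ∈ s, w i) := by
  induction s using Finset.cons_induction with
  | empty => simp [Qf_zero]
  | cons a s has ih =>
    rw [Finset.sum_cons, Finset.sum_cons]
    calc Qf φ (w a) + ∑ i ∈ s, Qf φ (w i)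
        ≤ Qf φ (w a) + Qf φ (∑ i ∈ s, w i) := by
          have := ih (fun i hi => hw i (Finset.mem_cons_of_mem hi)); linarith
    _ ≤ Qf φ (w a + ∑ i ∈ s, w i) := Qf_superadd φ (hw a (Finset.mem_cons_self a s))
          (Finset.sum_nonneg fun i hi => hw i (Finset.mem_cons_of_mem hi))

theorem sumPf_le (φ : E →L[ℝ] ℝ) (u : ℕ → E) (hu : ∀ n, 0 ≤ u n)
    (hd : ∀ i j, i ≠ j → u i ⊓ u j = 0) (N : ℕ) {y : E} (hy : 0 ≤ y) :
    ∑ n ∈ Finset.range N, Pf φ (u n) y ≤ Qf φ y := by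
  have htend : Tendsto (fun k : ℕ => ∑ n ∈ Finset.range N, Qf φ (y ⊓ k • u n)) atTop
      (𝓝 (∑ n ∈ Finset.range N, Pf φ (u n) y)) :=
    tendsto_finset_sum _ (fun n _ => Pf_tendsto (hu n) hy)
  refine le_of_tendsto htend (Eventually.of_forall (fun k => ?_))
  have hsum_le : (∑ n ∈ Finset.range N, y ⊓ k • u n) ≤ y := by
    refine my_sum_le_of_disjoint _ _ _ hy (fun i _ => Pf_term_nonneg (hu i) hy k)
      (fun i _ => inf_le_left) (fun i _ j _ hij => ?_)
    refine le_antisymm ?_ (le_inf (Pf_term_nonneg (hu i) hy k) (Pf_term_nonneg (hu j) hy k))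
    calc (y ⊓ k • u i) ⊓ (y ⊓ k • u j) ≤ (k • u i) ⊓ (k • u j) :=
          inf_le_inf inf_le_right inf_le_right
    _ = 0 := my_disj_nsmul₂ (hu i) (hu j) (hd i j hij) k k
  calc ∑ n ∈ Finset.range N, Qf φ (y ⊓ k • u n)
      ≤ Qf φ (∑ n ∈ Finset.range N, y ⊓ k • u n) :=
        Qf_sum_finset φ _ _ (fun i _ => Pf_term_nonneg (hu i) hy k)
  _ ≤ Qf φ y := Qf_mono φ (Finset.sum_nonneg fun i _ => Pf_term_nonneg (hu i) hy k) hsum_le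

set_option maxHeartbeats 1000000 in
theorem disjoint_weakly_null (hE : DualKB E) (x : ℕ → E)
    (hd : ∀ i j, i ≠ j → |x i| ⊓ |x j| = 0) (M : ℝ) (hM : ∀ n, ‖x n‖ ≤ M)
    (φ : E →L[ℝ] ℝ) (ε : ℝ) (hε : 0 < ε) (hφ : ∀ n, ε ≤ |φ (x n)|) : False := by
  set u : ℕ → E := fun n => |x n| with hu_def
  have hu : ∀ n, 0 ≤ u n := fun n => abs_nonneg _
  set h : ℕ → (E →L[ℝ] ℝ) := fun n => hFun φ (hu n) with hh_def
  set Fs : ℕ → StrongDual ℝ E := fun N => ∑ n ∈ Finset.range N, h n with hFs_def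
  have hFs_apply : ∀ N (z : E), Fs N z = ∑ n ∈ Finset.range N, h n z := by
    intro N z
    simp [hFs_def, ContinuousLinearMap.sum_apply]
  have hpos : ∀ N, DualPos (Fs N) := by
    intro N z hz
    rw [hFs_apply]
    exact Finset.sum_nonneg fun n _ => by
      rw [hh_def, hFun_apply_nonneg φ (hu n) hz]; exact Pf_nonneg (hu n) hz
  have hmono : ∀ N, DualLE (Fs N) (Fs (N + 1)) := by
    intro N z hz
    rw [hFs_apply, hFs_apply, Finset.sum_range_succ]
    have : (0:ℝ) ≤ h N z := by
      rw [hh_def, hFun_apply_nonneg φ (hu N) hz]; exact Pf_nonneg (hu N) hz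
    linarith
  have hbdd : ∃ C : ℝ, ∀ N, ‖Fs N‖ ≤ C := by
    refine ⟨2 * ‖φ‖, fun N => ?_⟩
    refine ContinuousLinearMap.opNorm_le_bound _ (by positivity) (fun z => ?_)
    have e1 : Fs N z = (∑ n ∈ Finset.range N, Pf φ (u n) z⁺)
        - (∑ n ∈ Finset.range N, Pf φ (u n) z⁻) := by
      rw [hFs_apply]
      rw [← Finset.sum_sub_distrib]
      exact Finset.sum_congr rfl fun n _ => by rw [hh_def, hFun_apply]
    have h1 : 0 ≤ ∑ n ∈ Finset.range N, Pf φ (u n) z⁺ :=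
      Finset.sum_nonneg fun n _ => Pf_nonneg (hu n) (posPart_nonneg z)
    have h2 : 0 ≤ ∑ n ∈ Finset.range N, Pf φ (u n) z⁻ :=
      Finset.sum_nonneg fun n _ => Pf_nonneg (hu n) (negPart_nonneg z)
    have h3 : ∑ n ∈ Finset.range N, Pf φ (u n) z⁺ ≤ ‖φ‖ * ‖z‖ := by
      refine le_trans (sumPf_le φ u hu hd N (posPart_nonneg z)) ?_
      refine le_trans (Qf_le φ (posPart_nonneg z)) ?_
      nlinarith [norm_posPart_le z, norm_nonneg φ]
    have h4 : ∑ n ∈ Finset.range N, Pf φ (u n) z⁻ ≤ ‖φ‖ * ‖z‖ := by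
      refine le_trans (sumPf_le φ u hu hd N (negPart_nonneg z)) ?_
      refine le_trans (Qf_le φ (negPart_nonneg z)) ?_
      nlinarith [norm_negPart_le z, norm_nonneg φ]
    rw [e1, Real.norm_eq_abs, abs_le]
    constructor <;> nlinarith
  obtain ⟨g, hg⟩ := hE Fs hpos hmono hbdd
  have hdiff : ∀ n, Fs (n + 1) - Fs n = h n := by
    intro n
    rw [hFs_def]
    simp [Finset.sum_range_succ]
  have hnorm0 : Tendsto (fun n => ‖h n‖) atTop (𝓝 0) := by
    have l1 : Tendsto (fun n => ‖Fs (n + 1) - g‖ + ‖Fs n - g‖) atTop (𝓝 0) := by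
      have := (hg.comp (tendsto_add_atTop_nat 1)).add hg
      simpa using this
    refine squeeze_zero (fun n => norm_nonneg _) (fun n => ?_) l1
    calc ‖h n‖ = ‖(Fs (n + 1) - g) - (Fs n - g)‖ := by rw [← hdiff n]; congr 1; abel
    _ ≤ ‖Fs (n + 1) - g‖ + ‖Fs n - g‖ := norm_sub_le _ _
  -- lower bound on ‖h n‖
  set M' : ℝ := max M 1 with hM'
  have hM'pos : 0 < M' := lt_of_lt_of_le one_pos (le_max_right _ _)
  have hlow : ∀ n, ε ≤ ‖h n‖ * M' := by
    intro n
    have e1 : h n (u n) = Pf φ (u n) (u n) := by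
      rw [hh_def]; exact hFun_apply_nonneg φ (hu n) (hu n)
    have e2 : Qf φ (u n) ≤ Pf φ (u n) (u n) := by
      have := Qf_le_Pf (φ := φ) (hu n) (hu n) 1
      rwa [one_nsmul, inf_idem] at this
    have e3 : |φ (x n)| ≤ Qf φ (u n) := by
      have p1 : φ (x n) ≤ Qf φ (u n) := le_Qf φ (hu n) le_rfl
      have p2 : φ (-(x n)) ≤ Qf φ (u n) := le_Qf φ (hu n) (by rw [abs_neg])
      rw [map_neg] at p2
      rw [abs_le]
      constructor <;> linarith
    have e4 : h n (u n) ≤ ‖h n‖ * ‖u n‖ :=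
      le_trans (le_abs_self _) (by simpa [Real.norm_eq_abs] using (h n).le_opNorm (u n))
    have e5 : ‖u n‖ ≤ M' := by
      rw [hu_def]
      simp only [norm_abs_eq_norm]
      exact le_trans (hM n) (le_max_left _ _)
    have e6 : ‖h n‖ * ‖u n‖ ≤ ‖h n‖ * M' := by nlinarith [norm_nonneg (h n)]
    linarith [hφ n]
  have : Tendsto (fun n => ‖h n‖ * M') atTop (𝓝 0) := by
    have := hnorm0.mul_const M'
    simpa using this
  have hev : ∀ᶠ n in atTop, ‖h n‖ * M' < ε := this.eventually (gt_mem_nhds hε)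
  obtain ⟨n, hn⟩ := hev.exists
  linarith [hlow n]

end WeakNull

section Final
variable {E : Type*} [NormedAddCommGroup E] [Lattice E] [IsOrderedAddMonoid E] [HasSolidNorm E] [NormedSpace ℝ E]

theorem finite_large (hE : DualKB E) (D : Set E) (hD : DisjointSet D) (hb : IsBounded D)
    (ψ : E →L[ℝ] ℝ) {ε : ℝ} (hε : 0 < ε) : {x ∈ D | ε ≤ |ψ x|}.Finite := by
  by_contra hinf
  replace hinf : {x ∈ D | ε ≤ |ψ x|}.Infinite := hinf
  obtain ⟨M, hM⟩ := isBounded_iff_forall_norm_le.mp hb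
  let e := hinf.natEmbedding
  refine disjoint_weakly_null hE (fun n => ((e n : {x ∈ D | ε ≤ |ψ x|}) : E)) ?_ M ?_ ψ ε hε ?_
  · intro i j hij
    have hne : ((e i : {x ∈ D | ε ≤ |ψ x|}) : E) ≠ ((e j : {x ∈ D | ε ≤ |ψ x|}) : E) :=
      fun hc => hij (e.injective (Subtype.ext hc))
    exact hD _ (e i).2.1 _ (e j).2.1 hne
  · intro n; exact hM _ (e n).2.1
  · intro n; exact (e n).2.2

end Final

/-- Domination for d-weakly compact operators: if `E'` is a KB-space, `0 ≤ S ≤ T` and `T`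
is d-weakly compact, then `S` is d-weakly compact. -/
theorem dWeaklyCompact_of_dominated {E F : Type*}
    [NormedAddCommGroup E] [Lattice E] [IsOrderedAddMonoid E] [HasSolidNorm E] [NormedSpace ℝ E] [CompleteSpace E]
    [NormedAddCommGroup F] [Lattice F] [IsOrderedAddMonoid F] [HasSolidNorm F] [NormedSpace ℝ F] [CompleteSpace F]
    (hE : DualKB E) (S T : E →L[ℝ] F)
    (hS : ∀ x : E, 0 ≤ x → 0 ≤ S x)
    (hST : ∀ x : E, 0 ≤ x → S x ≤ T x)
    (hT : ∀ D : Set E, DisjointSet D → IsBounded D → RelWeaklyCompact (T '' D)) :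
    ∀ D : Set E, DisjointSet D → IsBounded D → RelWeaklyCompact (S '' D) := by
  intro D hD hb
  have hinj : Function.Injective ((topDualPairing ℝ F).flip) :=
    separatingDual_iff_injective.mp inferInstance
  haveI hT2 : T2Space (WeakSpace ℝ F) := (WeakBilin.isEmbedding hinj).t2Space
  set K : Set (WeakSpace ℝ F) := insert 0 ((fun x : E => toWeakSpace ℝ F (S x)) '' D) with hK
  have hKcomp : IsCompact K := by
    rw [isCompact_iff_ultrafilter_le_nhds]
    intro 𝒰 h𝒰
    have hKmem : K ∈ 𝒰 := le_principal_iff.mp h𝒰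
    by_cases hfin : ∃ s ∈ 𝒰, s.Finite
    · obtain ⟨s, hs𝒰, hsfin⟩ := hfin
      obtain ⟨a, _, rfl⟩ := Ultrafilter.eq_pure_of_finite_mem hsfin hs𝒰
      exact ⟨a, hKmem, pure_le_nhds a⟩
    · push_neg at hfin
      refine ⟨0, Set.mem_insert _ _, ?_⟩
      have htend : Tendsto (id : WeakSpace ℝ F → WeakSpace ℝ F) ↑𝒰 (𝓝 0) := by
        refine (WeakBilin.tendsto_iff_forall_eval_tendsto (topDualPairing ℝ F).flip hinj).mpr ?_
        intro f
        simp only [Function.comp, id_eq, map_zero, LinearMap.zero_apply]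
        rw [Metric.tendsto_nhds]
        intro δ hδ
        set ψ : E →L[ℝ] ℝ := f.comp S with hψ
        have hfin' : {x ∈ D | δ ≤ |ψ x|}.Finite := finite_large hE D hD hb ψ hδ
        have himfin : ((fun x : E => toWeakSpace ℝ F (S x)) '' {x ∈ D | δ ≤ |ψ x|}).Finite :=
          hfin'.image _
        have hcompl : ((fun x : E => toWeakSpace ℝ F (S x)) '' {x ∈ D | δ ≤ |ψ x|})ᶜ ∈ 𝒰 :=
          Ultrafilter.compl_mem_iff_notMem.mpr (fun hmem => hfin _ hmem himfin)
        filter_upwards [hKmem, hcompl] with z hzK hznot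
        rcases hzK with rfl | ⟨x, hxD, rfl⟩
        · simpa using hδ
        · by_cases hx : δ ≤ |ψ x|
          · exact absurd (Set.mem_image_of_mem _
              (show x ∈ {x ∈ D | δ ≤ |ψ x|} from ⟨hxD, hx⟩)) hznot
          · push_neg at hx
            show dist (f (S x)) (f 0) < δ
            simpa [Real.dist_eq, hψ] using hx
      rwa [tendsto_id'] at htend
  have himg : toWeakSpace ℝ F '' (S '' D) ⊆ K := by
    rintro _ ⟨_, ⟨x, hxD, rfl⟩, rfl⟩
    exact Set.mem_insert_of_mem _ ⟨x, hxD, rfl⟩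
  exact hKcomp.of_isClosed_subset isClosed_closure
    (closure_minimal himg hKcomp.isClosed)
end
end

section
/- There exist positive operators S, T : ℓ¹ → c with 0 ≤ S ≤ T, T compact (rank one), and S not d-weakly compact; namely Sx = Σ_k (Σ_{i≥k} x_i) e_k and Tx = Σ_k (Σ_i x_i) e_k. -/
open Filter Topology Bornology

noncomputable section

/-- A subset of `ℓ¹` is disjoint if its elements have pairwise disjoint supports. -/
def DisjointSetL1 (D : Set (lp (fun _ : ℕ => ℝ) 1)) : Prop :=
  ∀ x ∈ D, ∀ y ∈ D, x ≠ y → ∀ i : ℕ, x i = 0 ∨ y i = 0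

namespace DWCAux

local notation "L1" => lp (fun _ : ℕ => ℝ) 1
local notation "Y" => C(OnePoint ℕ, ℝ)

lemma summable_norm (x : L1) : Summable fun i => ‖x i‖ := by
  simpa using (lp.memℓp x).summable (by norm_num)

lemma summable' (x : L1) : Summable fun i => x i :=
  (summable_norm x).of_norm

lemma norm_eq (x : L1) : ‖x‖ = ∑' i, ‖x i‖ := by
  simpa using lp.norm_eq_tsum_rpow (by norm_num) x

lemma summable_norm_ite (k : ℕ) (x : L1) :
    Summable fun i => ‖if k ≤ i then x i else 0‖ := by
  apply (summable_norm x).of_nonneg_of_le (fun i => norm_nonneg _)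
  intro i; by_cases h : k ≤ i <;> simp [h]

lemma summable_ite (k : ℕ) (x : L1) :
    Summable fun i => if k ≤ i then x i else 0 :=
  (summable_norm_ite k x).of_norm

lemma tail_eq_shift (k : ℕ) (x : L1) :
    (∑' i, if k ≤ i then x i else 0) = ∑' j : ℕ, x (j + k) := by
  have hinj : Function.Injective (fun j : ℕ => j + k) := add_left_injective k
  have hsupp : Function.support (fun i => if k ≤ i then x i else 0) ⊆
      Set.range (fun j : ℕ => j + k) := by
    intro i hi
    simp only [Function.mem_support] at hi
    by_cases h : k ≤ i
    · exact ⟨i - k, by show i - k + k = i; omega⟩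
    · simp [h] at hi
  rw [← hinj.tsum_eq hsupp]
  exact tsum_congr fun j => by simp

lemma tail_norm_le (k : ℕ) (x : L1) : ‖∑' i, if k ≤ i then x i else 0‖ ≤ ‖x‖ := by
  calc ‖∑' i, if k ≤ i then x i else 0‖ ≤ ∑' i, ‖if k ≤ i then x i else 0‖ :=
        norm_tsum_le_tsum_norm (summable_norm_ite k x)
    _ ≤ ∑' i, ‖x i‖ := by
        refine Summable.tsum_le_tsum (fun i => ?_) (summable_norm_ite k x) (summable_norm x)
        by_cases h : k ≤ i <;> simp [h]
    _ = ‖x‖ := (norm_eq x).symm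

lemma tail_tendsto (x : L1) :
    Tendsto (fun k => ∑' i, if k ≤ i then x i else 0) atTop (𝓝 0) := by
  have h := tendsto_sum_nat_add (fun i => x i)
  refine h.congr fun k => ?_
  exact (tail_eq_shift k x).symm

/-- `S x` as a continuous function on `OnePoint ℕ`. -/
def Sfun (x : L1) : C(OnePoint ℕ, ℝ) :=
  OnePoint.continuousMapMkDiscrete (fun k => ∑' i, if k ≤ i then x i else 0) 0
    (by rw [Nat.cofinite_eq_atTop]; exact tail_tendsto x)

@[simp] lemma Sfun_some (x : L1) (k : ℕ) :
    Sfun x (OnePoint.some k) = ∑' i, if k ≤ i then x i else 0 := rfl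

@[simp] lemma Sfun_infty (x : L1) : Sfun x OnePoint.infty = 0 := rfl

/-- The operator `S`. -/
def S : L1 →L[ℝ] C(OnePoint ℕ, ℝ) :=
  LinearMap.mkContinuous
    { toFun := Sfun
      map_add' := by
        intro x y
        ext p
        induction p using OnePoint.rec with
        | infty => simp
        | coe k =>
          simp only [Sfun_some, ContinuousMap.add_apply]
          rw [← Summable.tsum_add (summable_ite k x) (summable_ite k y)]
          refine tsum_congr fun i => ?_
          have : (x + y) i = x i + y i := by
            rw [lp.coeFn_add]; rfl
          by_cases h : k ≤ i <;> simp [h, this]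
      map_smul' := by
        intro c x
        ext p
        induction p using OnePoint.rec with
        | infty => simp
        | coe k =>
          simp only [Sfun_some, RingHom.id_apply, ContinuousMap.smul_apply, smul_eq_mul]
          rw [← tsum_mul_left]
          refine tsum_congr fun i => ?_
          have : (c • x) i = c * x i := by
            rw [lp.coeFn_smul]; rfl
          by_cases h : k ≤ i <;> simp [h, this] }
    1
    (by
      intro x
      rw [one_mul]
      refine (ContinuousMap.norm_le _ (norm_nonneg x)).2 fun p => ?_
      induction p using OnePoint.rec with
      | infty => simpa using norm_nonneg x
      | coe k => exact tail_norm_le k x)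

@[simp] lemma S_apply_some (x : L1) (k : ℕ) :
    S x (OnePoint.some k) = ∑' i, if k ≤ i then x i else 0 := rfl

@[simp] lemma S_apply_infty (x : L1) : S x OnePoint.infty = 0 := rfl

/-- The operator `T`. -/
def T : L1 →L[ℝ] C(OnePoint ℕ, ℝ) :=
  LinearMap.mkContinuous
    { toFun := fun x => (∑' i, x i) • (1 : C(OnePoint ℕ, ℝ))
      map_add' := by
        intro x y
        have h : (∑' i, (x + y) i) = (∑' i, x i) + ∑' i, y i := by
          rw [← Summable.tsum_add (summable' x) (summable' y)]
          refine tsum_congr fun i => ?_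
          rw [lp.coeFn_add]; rfl
        show (∑' i, (x + y) i) • (1 : C(OnePoint ℕ, ℝ)) =
          (∑' i, x i) • (1 : C(OnePoint ℕ, ℝ)) + (∑' i, y i) • (1 : C(OnePoint ℕ, ℝ))
        rw [h, add_smul]
      map_smul' := by
        intro c x
        have h : (∑' i, (c • x) i) = c * ∑' i, x i := by
          rw [← tsum_mul_left]
          refine tsum_congr fun i => ?_
          rw [lp.coeFn_smul]; rfl
        show (∑' i, (c • x) i) • (1 : C(OnePoint ℕ, ℝ)) =
          (RingHom.id ℝ) c • ((∑' i, x i) • (1 : C(OnePoint ℕ, ℝ)))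
        rw [h, RingHom.id_apply, mul_smul] }
    1
    (by
      intro x
      rw [one_mul]
      show ‖(∑' i, x i) • (1 : C(OnePoint ℕ, ℝ))‖ ≤ ‖x‖
      refine (ContinuousMap.norm_le _ (norm_nonneg x)).2 fun p => ?_
      simp only [ContinuousMap.smul_apply, ContinuousMap.one_apply, smul_eq_mul, mul_one]
      calc ‖∑' i, x i‖ ≤ ∑' i, ‖x i‖ := norm_tsum_le_tsum_norm (summable_norm x)
        _ = ‖x‖ := (norm_eq x).symm)

@[simp] lemma T_apply (x : L1) (p : OnePoint ℕ) : T x p = ∑' i, x i := by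
  show ((∑' i, x i) • (1 : C(OnePoint ℕ, ℝ))) p = ∑' i, x i
  simp

lemma T_compact : IsCompactOperator T := by
  refine ⟨(fun t : ℝ => t • (1 : C(OnePoint ℕ, ℝ))) '' Metric.closedBall 0 1,
    (isCompact_closedBall 0 1).image (continuous_id.smul continuous_const), ?_⟩
  refine Filter.mem_of_superset (Metric.closedBall_mem_nhds (0 : L1) one_pos) ?_
  intro x hx
  refine ⟨∑' i, x i, ?_, rfl⟩
  rw [Metric.mem_closedBall, dist_zero_right]
  calc ‖∑' i, x i‖ ≤ ∑' i, ‖x i‖ := norm_tsum_le_tsum_norm (summable_norm x)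
    _ = ‖x‖ := (norm_eq x).symm
    _ ≤ 1 := by simpa [dist_zero_right] using hx

/-- The unit vectors in `ℓ¹`. -/
def e (n : ℕ) : L1 := lp.single 1 n (1 : ℝ)

lemma e_apply_self (n : ℕ) : e n n = 1 := lp.single_apply_self 1 n 1

lemma e_apply_ne {n j : ℕ} (h : j ≠ n) : e n j = 0 := lp.single_apply_ne 1 n 1 h

lemma S_e_some (n k : ℕ) : S (e n) (OnePoint.some k) = if k ≤ n then 1 else 0 := by
  rw [S_apply_some]
  rw [tsum_eq_single n]
  · by_cases h : k ≤ n <;> simp [h, e_apply_self]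
  · intro i hi
    by_cases h : k ≤ i <;> simp [h, e_apply_ne hi]

end DWCAux

open DWCAux in
/-- There are operators `0 ≤ S ≤ T : ℓ¹ → c` (with `c` realized as the continuous functions
on the one-point compactification of `ℕ`), given by `Sx = Σₖ (Σ_{i≥k} xᵢ) eₖ` and
`Tx = Σₖ (Σᵢ xᵢ) eₖ`, such that `T` is compact (even rank one) while `S` is not
d-weakly compact. -/
theorem exists_dominated_not_dWeaklyCompact :
    ∃ S T : lp (fun _ : ℕ => ℝ) 1 →L[ℝ] C(OnePoint ℕ, ℝ),
      (∀ x : lp (fun _ : ℕ => ℝ) 1, (∀ i, 0 ≤ x i) → ∀ p : OnePoint ℕ, 0 ≤ S x p) ∧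
      (∀ x : lp (fun _ : ℕ => ℝ) 1, (∀ i, 0 ≤ x i) → ∀ p : OnePoint ℕ, S x p ≤ T x p) ∧
      (∀ (x : lp (fun _ : ℕ => ℝ) 1) (k : ℕ),
        S x (OnePoint.some k) = ∑' i : ℕ, if k ≤ i then x i else 0) ∧
      (∀ (x : lp (fun _ : ℕ => ℝ) 1) (p : OnePoint ℕ), T x p = ∑' i : ℕ, x i) ∧
      IsCompactOperator T ∧
      ¬ (∀ D : Set (lp (fun _ : ℕ => ℝ) 1), DisjointSetL1 D → IsBounded D →
        RelWeaklyCompact (S '' D)) := by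
  refine ⟨DWCAux.S, DWCAux.T, ?_, ?_, ?_, ?_, T_compact, ?_⟩
  · -- positivity of S
    intro x hx p
    induction p using OnePoint.rec with
    | infty => simp
    | coe k =>
      rw [S_apply_some]
      refine tsum_nonneg fun i => ?_
      by_cases h : k ≤ i <;> simp [h, hx i]
  · -- S ≤ T
    intro x hx p
    induction p using OnePoint.rec with
    | infty =>
      rw [S_apply_infty, T_apply]
      exact tsum_nonneg hx
    | coe k =>
      rw [S_apply_some, T_apply]
      refine Summable.tsum_le_tsum (fun i => ?_) (summable_ite k x) (summable' x)
      by_cases h : k ≤ i <;> simp [h, hx i]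
  · intro x k; exact S_apply_some x k
  · intro x p; exact T_apply x p
  · -- S is not d-weakly compact
    intro hcontra
    set D : Set (lp (fun _ : ℕ => ℝ) 1) := Set.range e with hD
    have hdisj : DisjointSetL1 D := by
      rintro x ⟨n, rfl⟩ y ⟨m, rfl⟩ hxy i
      have hnm : n ≠ m := fun h => hxy (by rw [h])
      by_cases h : i = n
      · subst h
        exact Or.inr (e_apply_ne hnm)
      · exact Or.inl (e_apply_ne h)
    have hbdd : IsBounded D := by
      refine Metric.isBounded_closedBall (x := (0 : lp (fun _ : ℕ => ℝ) 1)) (r := 1) |>.subset ?_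
      rintro x ⟨n, rfl⟩
      rw [Metric.mem_closedBall, dist_zero_right]
      have : ‖e n‖ = ‖(1 : ℝ)‖ := lp.norm_single (E := fun _ : ℕ => ℝ) (p := 1) (by norm_num) n (1 : ℝ)
      rw [this]; simp
    have hcomp := hcontra D hdisj hbdd
    -- get a weak cluster point of (S (e n))
    set u : ℕ → WeakSpace ℝ C(OnePoint ℕ, ℝ) :=
      fun n => toWeakSpace ℝ C(OnePoint ℕ, ℝ) (DWCAux.S (e n)) with hu
    have hmaps : Filter.map u atTop ≤
        𝓟 (closure (toWeakSpace ℝ C(OnePoint ℕ, ℝ) '' (DWCAux.S '' D))) := by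
      refine le_principal_iff.2 (Filter.mem_map.2 ?_)
      refine Filter.Eventually.of_forall fun n => subset_closure ?_
      exact ⟨DWCAux.S (e n), ⟨e n, ⟨n, rfl⟩, rfl⟩, rfl⟩
    obtain ⟨f, -, hf⟩ := hcomp.exists_mapClusterPt hmaps
    set g : C(OnePoint ℕ, ℝ) := (toWeakSpace ℝ C(OnePoint ℕ, ℝ)).symm f with hg
    -- evaluation functionals are weakly continuous
    have hevalcont : ∀ p : OnePoint ℕ,
        Continuous fun h : WeakSpace ℝ C(OnePoint ℕ, ℝ) =>
          (ContinuousMap.evalCLM ℝ p : C(OnePoint ℕ, ℝ) →L[ℝ] ℝ)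
            ((toWeakSpace ℝ C(OnePoint ℕ, ℝ)).symm h) := by
      intro p
      exact WeakBilin.eval_continuous ((topDualPairing ℝ C(OnePoint ℕ, ℝ)).flip)
        (ContinuousMap.evalCLM ℝ p)
    have key : ∀ p : OnePoint ℕ,
        MapClusterPt (g p) atTop (fun n => DWCAux.S (e n) p) := by
      intro p
      have := hf.continuousAt_comp (hevalcont p).continuousAt
      exact this
    have uniq : ∀ {a b : ℝ} {v : ℕ → ℝ},
        MapClusterPt a atTop v → Tendsto v atTop (𝓝 b) → a = b := by
      intro a b v hv htv
      exact eq_of_nhds_neBot (hv.clusterPt.mono htv)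
    -- g k = 1 for every k
    have hg1 : ∀ k : ℕ, g (OnePoint.some k) = 1 := by
      intro k
      refine uniq (key (OnePoint.some k)) ?_
      have : ∀ᶠ n in atTop, DWCAux.S (e n) (OnePoint.some k) = 1 := by
        filter_upwards [eventually_ge_atTop k] with n hn
        rw [S_e_some]; simp [hn]
      exact Tendsto.congr' (this.mono fun n hn => hn.symm) tendsto_const_nhds
    -- g ∞ = 0
    have hg0 : g OnePoint.infty = 0 := by
      refine uniq (key OnePoint.infty) ?_
      have : ∀ n, DWCAux.S (e n) OnePoint.infty = (0 : ℝ) := fun n => S_apply_infty (e n)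
      simpa [this] using tendsto_const_nhds (α := ℕ) (f := atTop) (x := (0:ℝ))
    -- contradiction with continuity of g
    have hc := (OnePoint.continuous_iff_from_nat (g : OnePoint ℕ → ℝ)).1 (map_continuous g)
    have h1 : Tendsto (fun k : ℕ => g (OnePoint.some k)) atTop (𝓝 1) := by
      simp only [hg1]
      exact tendsto_const_nhds
    have : (1 : ℝ) = 0 := by
      have := tendsto_nhds_unique h1 (hg0 ▸ hc)
      simpa using this
    norm_num at this
end
end
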